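/- Let B, R > 0 and ℓ > 2R, and set x* = (0, −i·√(ℓ²/4 − R²)). Then the second-order complex partial derivatives of s₀ at x* satisfy: ∂₁∂₂ s₀(x*) = 0, ∂₁² s₀(x*) = (Bℓ/(2R²))·(ℓ − √(ℓ² − 4R²)), and ∂₂² s₀(x*) = (B/(2R²))·√(ℓ² − 4R²)·(ℓ − √(ℓ² − 4R²)); in particular all entries of the Hessian of s₀ at x* are real. -/

import Mathlib

/-- The phase function `s₀` of the paper, with parameters `B`, `R`, `ℓ`,
using the principal branch `Complex.log` of the complex logarithm. -/
noncomputable def s0 (B R ℓ : ℝ) (x₁ x₂ : ℂ) : ℂ :=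
  ((B : ℂ) / 4) * (x₁ + (ℓ : ℂ) / 2) ^ 2 + ((B : ℂ) / 4) * (x₁ - (ℓ : ℂ) / 2) ^ 2
    + ((B : ℂ) / 2) * x₂ ^ 2 - (B : ℂ) * (R : ℂ) ^ 2 / 2
    + Complex.I * ((B : ℂ) * (ℓ : ℂ) / 2) * x₂
    - ((B : ℂ) * (R : ℂ) ^ 2 / 2) * Complex.log (((ℓ : ℂ) / 2 + x₁ + Complex.I * x₂) / (R : ℂ))
    - ((B : ℂ) * (R : ℂ) ^ 2 / 2) * Complex.log (((ℓ : ℂ) / 2 - x₁ + Complex.I * x₂) / (R : ℂ))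

/-!
Write `u₊ = ℓ/2 + x₁ + i x₂`, `u₋ = ℓ/2 − x₁ + i x₂` and `c = BR²/2`. Wherever both `u₊` and `u₋`
lie in the slit plane, `∂₁ s₀ = B x₁ − c/u₊ + c/u₋` and `∂₂ s₀ = B x₂ + iBℓ/2 − ic/u₊ − ic/u₋`,
so the Hessian there is `∂₁² s₀ = B + c/u₊² + c/u₋²`, `∂₂² s₀ = B − c/u₊² − c/u₋²`,
`∂₂∂₁ s₀ = ic/u₊² − ic/u₋²`. At `x*` both `u₊` and `u₋` equal the positive real
`p = ℓ/2 + √(ℓ²/4 − R²)`: the mixed derivative cancels, and `R² = p (ℓ − p)` turns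
`B ± BR²/p²` into the stated closed forms.
-/

open Complex Filter Topology

lemma Complex.div_ofReal_mem_slitPlane {z : ℂ} {r : ℝ} (hz : z ∈ slitPlane) (hr : 0 < r) :
    z / (r : ℂ) ∈ slitPlane := by
  rw [mem_slitPlane_iff, div_ofReal_re, div_ofReal_im] at *
  exact hz.imp (fun h => div_pos h hr) (fun h => div_ne_zero h hr.ne')

lemma HasDerivAt.clog_div_ofReal {f : ℂ → ℂ} {f' x : ℂ} {r : ℝ} (hf : HasDerivAt f f' x)
    (hx : f x ∈ slitPlane) (hr : 0 < r) :
    HasDerivAt (fun t => Complex.log (f t / (r : ℂ))) (f' / f x) x := by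
  have hr' : (r : ℂ) ≠ 0 := ofReal_ne_zero.2 hr.ne'
  simpa [div_div_div_cancel_right₀ hr'] using
    (hf.div_const (r : ℂ)).clog (div_ofReal_mem_slitPlane hx hr)

lemma hasDerivAt_const_add_mul {𝕜 : Type*} [NontriviallyNormedField 𝕜] (a b x : 𝕜) :
    HasDerivAt (fun t => a + b * t) b x := by
  simpa using ((hasDerivAt_id x).const_mul b).const_add a

def s0Domain (ℓ : ℝ) : Set (ℂ × ℂ) :=
  {x | (ℓ : ℂ) / 2 + x.1 + I * x.2 ∈ slitPlane ∧ (ℓ : ℂ) / 2 - x.1 + I * x.2 ∈ slitPlane}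

lemma isOpen_s0Domain (ℓ : ℝ) : IsOpen (s0Domain ℓ) :=
  (isOpen_slitPlane.preimage (by fun_prop)).inter (isOpen_slitPlane.preimage (by fun_prop))

section
variable {B R ℓ : ℝ} {z₀ w₀ : ℂ}

lemma hasDerivAt_s0_fst (hR : 0 < R) {z w : ℂ} (hzw : (z, w) ∈ s0Domain ℓ) :
    HasDerivAt (fun z => s0 B R ℓ z w)
      (B * z - B * R ^ 2 / 2 / (ℓ / 2 + z + I * w) + B * R ^ 2 / 2 / (ℓ / 2 - z + I * w)) z := by
  have hu : HasDerivAt (fun z : ℂ => (ℓ : ℂ) / 2 + z + I * w) 1 z :=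
    ((hasDerivAt_id z).const_add _).add_const _
  have hv : HasDerivAt (fun z : ℂ => (ℓ : ℂ) / 2 - z + I * w) (-1) z :=
    ((hasDerivAt_id z).const_sub _).add_const _
  refine ((((((((hasDerivAt_id z).add_const _).pow 2).const_mul _).add
    ((((hasDerivAt_id z).sub_const _).pow 2).const_mul _)).add_const _).sub_const _).add_const _
    |>.sub ((hu.clog_div_ofReal hzw.1 hR).const_mul _) |>.sub
    ((hv.clog_div_ofReal hzw.2 hR).const_mul _)).congr_deriv ?_
  simp only [id, Nat.cast_ofNat]
  ring

lemma hasDerivAt_s0_snd (hR : 0 < R) {z w : ℂ} (hzw : (z, w) ∈ s0Domain ℓ) :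
    HasDerivAt (fun w => s0 B R ℓ z w)
      (B * w + I * (B * ℓ / 2) - B * R ^ 2 / 2 * I / (ℓ / 2 + z + I * w)
        - B * R ^ 2 / 2 * I / (ℓ / 2 - z + I * w)) w := by
  have hu := hasDerivAt_const_add_mul ((ℓ : ℂ) / 2 + z) I w
  have hv := hasDerivAt_const_add_mul ((ℓ : ℂ) / 2 - z) I w
  refine (((((((hasDerivAt_id w).pow 2).const_mul _).const_add _).sub_const _).add
    ((hasDerivAt_id w).const_mul _)).sub ((hu.clog_div_ofReal hzw.1 hR).const_mul _) |>.sub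
    ((hv.clog_div_ofReal hzw.2 hR).const_mul _)).congr_deriv ?_
  simp only [id, Nat.cast_ofNat]
  ring

lemma eventually_mem_s0Domain (h : (z₀, w₀) ∈ s0Domain ℓ) :
    ∀ᶠ z in 𝓝 z₀, ∀ᶠ w in 𝓝 w₀, (z, w) ∈ s0Domain ℓ :=
  ((isOpen_s0Domain ℓ).eventually_mem h).curry_nhds

lemma deriv_deriv_s0_fst (hR : 0 < R) (h : (z₀, w₀) ∈ s0Domain ℓ) :
    deriv (deriv fun z => s0 B R ℓ z w₀) z₀ =
      B + B * R ^ 2 / 2 / (ℓ / 2 + z₀ + I * w₀) ^ 2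
        + B * R ^ 2 / 2 / (ℓ / 2 - z₀ + I * w₀) ^ 2 := by
  have hderiv : deriv (fun z => s0 B R ℓ z w₀) =ᶠ[𝓝 z₀] fun z =>
      B * z - B * R ^ 2 / 2 / (ℓ / 2 + z + I * w₀) + B * R ^ 2 / 2 / (ℓ / 2 - z + I * w₀) :=
    (eventually_mem_s0Domain h).mono fun _ hz => (hasDerivAt_s0_fst hR hz.self_of_nhds).deriv
  have hu : HasDerivAt (fun z : ℂ => (ℓ : ℂ) / 2 + z + I * w₀) 1 z₀ :=
    ((hasDerivAt_id z₀).const_add _).add_const _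
  have hv : HasDerivAt (fun z : ℂ => (ℓ : ℂ) / 2 - z + I * w₀) (-1) z₀ :=
    ((hasDerivAt_id z₀).const_sub _).add_const _
  rw [hderiv.deriv_eq]
  refine HasDerivAt.deriv ((((hasDerivAt_id z₀).const_mul _).sub
    ((hasDerivAt_const _ _).div hu (slitPlane_ne_zero h.1))).add
    ((hasDerivAt_const _ _).div hv (slitPlane_ne_zero h.2)) |>.congr_deriv ?_)
  ring

lemma deriv_deriv_s0_snd (hR : 0 < R) (h : (z₀, w₀) ∈ s0Domain ℓ) :
    deriv (deriv fun w => s0 B R ℓ z₀ w) w₀ =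
      B - B * R ^ 2 / 2 / (ℓ / 2 + z₀ + I * w₀) ^ 2
        - B * R ^ 2 / 2 / (ℓ / 2 - z₀ + I * w₀) ^ 2 := by
  have hderiv : deriv (fun w => s0 B R ℓ z₀ w) =ᶠ[𝓝 w₀] fun w =>
      B * w + I * (B * ℓ / 2) - B * R ^ 2 / 2 * I / (ℓ / 2 + z₀ + I * w)
        - B * R ^ 2 / 2 * I / (ℓ / 2 - z₀ + I * w) :=
    (eventually_mem_s0Domain h).self_of_nhds.mono fun _ hw => (hasDerivAt_s0_snd hR hw).deriv
  have hu := hasDerivAt_const_add_mul ((ℓ : ℂ) / 2 + z₀) I w₀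
  have hv := hasDerivAt_const_add_mul ((ℓ : ℂ) / 2 - z₀) I w₀
  rw [hderiv.deriv_eq]
  refine HasDerivAt.deriv (((((hasDerivAt_id w₀).const_mul _).add_const _).sub
    ((hasDerivAt_const _ _).div hu (slitPlane_ne_zero h.1))).sub
    ((hasDerivAt_const _ _).div hv (slitPlane_ne_zero h.2)) |>.congr_deriv ?_)
  linear_combination (B * R ^ 2 / 2 / (ℓ / 2 + z₀ + I * w₀) ^ 2
    + B * R ^ 2 / 2 / (ℓ / 2 - z₀ + I * w₀) ^ 2) * I_sq

lemma deriv_deriv_s0_snd_fst (hR : 0 < R) (h : (z₀, w₀) ∈ s0Domain ℓ) :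
    deriv (fun w => deriv (fun z => s0 B R ℓ z w) z₀) w₀ =
      B * R ^ 2 / 2 * I / (ℓ / 2 + z₀ + I * w₀) ^ 2
        - B * R ^ 2 / 2 * I / (ℓ / 2 - z₀ + I * w₀) ^ 2 := by
  have hderiv : (fun w => deriv (fun z => s0 B R ℓ z w) z₀) =ᶠ[𝓝 w₀] fun w =>
      B * z₀ - B * R ^ 2 / 2 / (ℓ / 2 + z₀ + I * w) + B * R ^ 2 / 2 / (ℓ / 2 - z₀ + I * w) :=
    (eventually_mem_s0Domain h).self_of_nhds.mono fun _ hw => (hasDerivAt_s0_fst hR hw).deriv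
  have hu := hasDerivAt_const_add_mul ((ℓ : ℂ) / 2 + z₀) I w₀
  have hv := hasDerivAt_const_add_mul ((ℓ : ℂ) / 2 - z₀) I w₀
  rw [hderiv.deriv_eq]
  refine HasDerivAt.deriv ((((hasDerivAt_const _ _).sub
    ((hasDerivAt_const _ _).div hu (slitPlane_ne_zero h.1))).add
    ((hasDerivAt_const _ _).div hv (slitPlane_ne_zero h.2))) |>.congr_deriv ?_)
  ring

end

theorem s0_hessian_general (B R ℓ : ℝ) (hR : 0 < R) (hℓ : 2 * R < ℓ) :
    deriv (fun w : ℂ => deriv (fun z : ℂ => s0 B R ℓ z w) 0)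
        (-(Complex.I * (Real.sqrt (ℓ ^ 2 / 4 - R ^ 2) : ℂ))) = 0 ∧
    deriv (deriv (fun z : ℂ => s0 B R ℓ z (-(Complex.I * (Real.sqrt (ℓ ^ 2 / 4 - R ^ 2) : ℂ))))) 0
      = ((B * ℓ / (2 * R ^ 2) * (ℓ - Real.sqrt (ℓ ^ 2 - 4 * R ^ 2)) : ℝ) : ℂ) ∧
    deriv (deriv (fun w : ℂ => s0 B R ℓ 0 w))
        (-(Complex.I * (Real.sqrt (ℓ ^ 2 / 4 - R ^ 2) : ℂ)))
      = ((B / (2 * R ^ 2) * Real.sqrt (ℓ ^ 2 - 4 * R ^ 2)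
          * (ℓ - Real.sqrt (ℓ ^ 2 - 4 * R ^ 2)) : ℝ) : ℂ) := by
  set a := Real.sqrt (ℓ ^ 2 / 4 - R ^ 2)
  have ha : a ^ 2 = ℓ ^ 2 / 4 - R ^ 2 := Real.sq_sqrt (by nlinarith)
  have hp : 0 < ℓ / 2 + a := by linarith [Real.sqrt_nonneg (ℓ ^ 2 / 4 - R ^ 2)]
  have hsqrt : Real.sqrt (ℓ ^ 2 - 4 * R ^ 2) = 2 * a := by
    rw [show ℓ ^ 2 - 4 * R ^ 2 = 2 ^ 2 * (ℓ ^ 2 / 4 - R ^ 2) by ring,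
      Real.sqrt_mul' _ (by nlinarith), Real.sqrt_sq zero_le_two]
  have hu : (ℓ : ℂ) / 2 + 0 + I * -(I * a) = (ℓ / 2 + a : ℝ) := by
    push_cast; linear_combination -(a : ℂ) * I_sq
  have hv : (ℓ : ℂ) / 2 - 0 + I * -(I * a) = (ℓ / 2 + a : ℝ) := by
    push_cast; linear_combination -(a : ℂ) * I_sq
  have hmem : ((0 : ℂ), -(I * a)) ∈ s0Domain ℓ :=
    ⟨hu ▸ ofReal_mem_slitPlane.2 hp, hv ▸ ofReal_mem_slitPlane.2 hp⟩
  have hp' : ℓ + 2 * a ≠ 0 := by linarith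
  refine ⟨?_, ?_, ?_⟩
  · rw [deriv_deriv_s0_snd_fst hR hmem, hu, hv, sub_self]
  · have h : B + B * R ^ 2 / 2 / (ℓ / 2 + a) ^ 2 + B * R ^ 2 / 2 / (ℓ / 2 + a) ^ 2
        = B * ℓ / (2 * R ^ 2) * (ℓ - 2 * a) := by
      field_simp
      linear_combination 2 * B * ((ℓ + 2 * a) ^ 2 + 4 * R ^ 2 + ℓ ^ 2 - 4 * a ^ 2) * ha
    rw [deriv_deriv_s0_fst hR hmem, hu, hv, hsqrt]
    exact_mod_cast h
  · have h : B - B * R ^ 2 / 2 / (ℓ / 2 + a) ^ 2 - B * R ^ 2 / 2 / (ℓ / 2 + a) ^ 2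
        = B / (2 * R ^ 2) * (2 * a) * (ℓ - 2 * a) := by
      field_simp
      linear_combination B * ((ℓ + 2 * a) ^ 2 - 4 * R ^ 2 - ℓ ^ 2 + 4 * a ^ 2) * ha
    rw [deriv_deriv_s0_snd hR hmem, hu, hv, hsqrt]
    exact_mod_cast h

/-- the second-order complex partial derivatives of `s₀` at
`x* = (0, −i√(ℓ²/4 − R²))` satisfy `∂₁∂₂ s₀(x*) = 0`,
`∂₁² s₀(x*) = (Bℓ/(2R²))(ℓ − √(ℓ² − 4R²))` and
`∂₂² s₀(x*) = (B/(2R²))√(ℓ² − 4R²)(ℓ − √(ℓ² − 4R²))`; in particular all entries of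
the Hessian are real (the right-hand sides are real numbers coerced into `ℂ`). -/
theorem s0_hessian (B R ℓ : ℝ) (hB : 0 < B) (hR : 0 < R) (hℓ : 2 * R < ℓ) :
    deriv (fun w : ℂ => deriv (fun z : ℂ => s0 B R ℓ z w) 0)
        (-(Complex.I * (Real.sqrt (ℓ ^ 2 / 4 - R ^ 2) : ℂ))) = 0 ∧
    deriv (deriv (fun z : ℂ => s0 B R ℓ z (-(Complex.I * (Real.sqrt (ℓ ^ 2 / 4 - R ^ 2) : ℂ))))) 0
      = ((B * ℓ / (2 * R ^ 2) * (ℓ - Real.sqrt (ℓ ^ 2 - 4 * R ^ 2)) : ℝ) : ℂ) ∧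
    deriv (deriv (fun w : ℂ => s0 B R ℓ 0 w))
        (-(Complex.I * (Real.sqrt (ℓ ^ 2 / 4 - R ^ 2) : ℂ)))
      = ((B / (2 * R ^ 2) * Real.sqrt (ℓ ^ 2 - 4 * R ^ 2)
          * (ℓ - Real.sqrt (ℓ ^ 2 - 4 * R ^ 2)) : ℝ) : ℂ) :=
  s0_hessian_general B R ℓ hR hℓ
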